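/- Let m, n be positive integers and G a finite nilpotent group that can be generated by m elements. Suppose G is generated by a set of n-Engel elements. Then G can be generated by m elements each of which is n-Engel. -/

import Mathlib

open scoped commutatorElement

/-- The left-normed iterated commutator `[x, y, y, ..., y]` with `n` copies of `y`. -/
def engelComm {G : Type*} [Group G] (x y : G) : ℕ → G
  | 0 => x
  | n + 1 => ⁅engelComm x y n, y⁆

/-- `y` is an `n`-Engel element of `G`. -/
def IsNEngel {G : Type*} [Group G] (n : ℕ) (y : G) : Prop :=
  ∀ x : G, engelComm x y n = 1

/-! For a finite `p`-group `P`, the Frattini quotient `P ⧸ Φ(P)` is elementary abelian, i.e. an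
`𝔽_p`-vector space, of dimension at most `m` when `P` is `m`-generated. The image of any generating
set spans it and so contains a basis, of at most `m` vectors; the corresponding elements generate
`P` because `Φ(P)` consists of non-generators.

A finite nilpotent group is the direct product of its Sylow subgroups. Choosing, in every factor,
at most `m` generators among the projections of the `n`-Engel generators, padding with `1`, and
combining them coordinatewise gives `m` elements whose coordinates are all `n`-Engel, hence which
are `n`-Engel; they generate because the factors have pairwise coprime orders. -/

open Subgroup Module

theorem Subgroup.closure_image_eq_top {G H : Type*} [Group G] [Group H] {f : G →* H}
    (hf : Function.Surjective f) {S : Set G} (hS : closure S = ⊤) : closure (f '' S) = ⊤ := by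
  rw [← MonoidHom.map_closure, hS, ← MonoidHom.range_eq_map, MonoidHom.range_eq_top.mpr hf]

theorem Submodule.exists_finset_subset_card_le_finrank_span_eq_top {K V ι : Type*}
    [DivisionRing K] [AddCommGroup V] [Module K V] [Module.Finite K V] {v : ι → V} {S : Set ι}
    (hS : Submodule.span K (v '' S) = ⊤) :
    ∃ t : Finset ι, ↑t ⊆ S ∧ t.card ≤ finrank K V ∧ Submodule.span K (v '' t) = ⊤ := by
  obtain ⟨b, hbS, -, hspan, hli⟩ :=
    exists_linearIndepOn_extension (linearIndepOn_empty K v) (Set.empty_subset S)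
  have : Finite b := hli.finite
  refine ⟨b.toFinite.toFinset, by simpa using hbS, ?_, ?_⟩
  · have := Fintype.ofFinite b
    simpa using hli.fintype_card_le_finrank
  · rw [eq_top_iff, ← hS, Submodule.span_le]
    simpa using hspan

theorem Submodule.toAddSubgroup_span_zmod {n : ℕ} {M : Type*} [AddCommGroup M]
    [Module (ZMod n) M] (s : Set M) :
    (Submodule.span (ZMod n) s).toAddSubgroup = AddSubgroup.closure s :=
  le_antisymm
    (Submodule.span_le.mpr AddSubgroup.subset_closure :
      Submodule.span (ZMod n) s ≤ AddSubgroup.toZModSubmodule n (AddSubgroup.closure s))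
    ((AddSubgroup.closure_le _).mpr Submodule.subset_span)

theorem Submodule.span_ofMul_image_eq_top_iff {n : ℕ} {V : Type*} [CommGroup V]
    [Module (ZMod n) (Additive V)] (T : Set V) :
    Submodule.span (ZMod n) (Additive.ofMul '' T) = ⊤ ↔ closure T = ⊤ := by
  rw [← Submodule.toAddSubgroup_inj, Submodule.toAddSubgroup_span_zmod,
    Equiv.image_eq_preimage_symm, Additive.ofMul_symm_eq, ← toAddSubgroup_closure]
  simp

theorem exists_finset_subset_card_le_closure_eq_top_of_pow_eq_one {V ι : Type*} [CommGroup V]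
    [Finite V] {p : ℕ} [Fact p.Prime] (hV : ∀ v : V, v ^ p = 1) {m : ℕ}
    (hm : ∃ f : Fin m → V, closure (Set.range f) = ⊤) {s : ι → V} {S : Set ι}
    (hS : closure (s '' S) = ⊤) :
    ∃ t : Finset ι, ↑t ⊆ S ∧ t.card ≤ m ∧ closure (s '' t) = ⊤ := by
  have : Module (ZMod p) (Additive V) :=
    AddCommGroup.zmodModule fun x => congrArg Additive.ofMul (hV x.toMul)
  have hspan (T : Set ι) : Submodule.span (ZMod p) ((fun i => Additive.ofMul (s i)) '' T) = ⊤ ↔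
      closure (s '' T) = ⊤ := by
    rw [← Submodule.span_ofMul_image_eq_top_iff (n := p), Set.image_image]
  obtain ⟨f, hf⟩ := hm
  have hrank : finrank (ZMod p) (Additive V) ≤ m := by
    have hf' := (Submodule.span_ofMul_image_eq_top_iff (n := p) (Set.range f)).2 hf
    rw [← Set.range_comp] at hf'
    calc finrank (ZMod p) (Additive V) = (Set.range (Additive.ofMul ∘ f)).finrank (ZMod p) := by
          rw [Set.finrank, hf', finrank_top]
      _ ≤ m := by simpa using finrank_range_le_card (R := ZMod p) (Additive.ofMul ∘ f)
  obtain ⟨t, htS, htcard, htspan⟩ :=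
    Submodule.exists_finset_subset_card_le_finrank_span_eq_top ((hspan S).2 hS)
  exact ⟨t, htS, htcard.trans hrank, (hspan t).1 htspan⟩

theorem mem_frattini_of_forall_isCoatom {G : Type*} [Group G] {x : G}
    (h : ∀ M : Subgroup G, IsCoatom M → x ∈ M) : x ∈ frattini G := by
  simpa [frattini, Order.radical, mem_iInf] using h

namespace IsPGroup

variable {p : ℕ} [hp : Fact p.Prime] {P : Type*} [Group P] [Finite P]

theorem index_eq_of_isCoatom (hP : IsPGroup p P) {M : Subgroup P} (hM : IsCoatom M) :
    M.index = p := by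
  obtain ⟨j, hj⟩ := IsPGroup.iff_card.mp (hP.to_subgroup M)
  obtain ⟨k, hk⟩ := hP.index M
  have hk0 : k ≠ 0 := by
    rintro rfl
    exact hM.1 (index_eq_one.mp hk)
  have hcard := M.card_mul_index
  rw [hj, hk, ← pow_add] at hcard
  obtain ⟨K, hK, hMK⟩ :=
    Sylow.exists_subgroup_card_pow_succ (hcard ▸ pow_dvd_pow p (by omega)) hj
  have hKM : M ≠ K := by
    rintro rfl
    have := Nat.pow_right_injective hp.out.two_le (hj.symm.trans hK)
    omega
  rw [hM.2 K (lt_of_le_of_ne hMK hKM), card_top, ← hcard] at hK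
  have := Nat.pow_right_injective hp.out.two_le hK
  rw [hk, show k = 1 by omega, pow_one]

theorem commutator_mem_of_isCoatom (hP : IsPGroup p P) {M : Subgroup P} (hM : IsCoatom M)
    (x y : P) : ⁅x, y⁆ ∈ M := by
  have : M.Normal := (Group.isNilpotent_of_finite_tfae.out 0 2 rfl rfl).mp hP.isNilpotent M hM
  have : IsCyclic (P ⧸ M) := isCyclic_of_prime_card (index_eq_of_isCoatom hP hM)
  rw [← QuotientGroup.eq_one_iff, ← QuotientGroup.mk'_apply, map_commutatorElement,
    commutatorElement_eq_one_iff_commute]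
  exact Std.Commutative.comm _ _

theorem pow_mem_of_isCoatom (hP : IsPGroup p P) {M : Subgroup P} (hM : IsCoatom M) (x : P) :
    x ^ p ∈ M := by
  have : M.Normal := (Group.isNilpotent_of_finite_tfae.out 0 2 rfl rfl).mp hP.isNilpotent M hM
  exact index_eq_of_isCoatom hP hM ▸ M.pow_index_mem x

theorem commutator_mem_frattini (hP : IsPGroup p P) (x y : P) : ⁅x, y⁆ ∈ frattini P :=
  mem_frattini_of_forall_isCoatom fun _ hM => commutator_mem_of_isCoatom hP hM x y

theorem pow_mem_frattini (hP : IsPGroup p P) (x : P) : x ^ p ∈ frattini P :=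
  mem_frattini_of_forall_isCoatom fun _ hM => pow_mem_of_isCoatom hP hM x

open scoped IsMulCommutative in
theorem exists_finset_subset_card_le_closure_eq_top (hP : IsPGroup p P) {m : ℕ}
    (hm : ∃ f : Fin m → P, closure (Set.range f) = ⊤) {S : Set P} (hS : closure S = ⊤) :
    ∃ t : Finset P, ↑t ⊆ S ∧ t.card ≤ m ∧ closure (t : Set P) = ⊤ := by
  set π := QuotientGroup.mk' (frattini P)
  have hπ : Function.Surjective π := QuotientGroup.mk'_surjective _
  have : IsMulCommutative (P ⧸ frattini P) := ⟨⟨fun a b => by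
    obtain ⟨x, rfl⟩ := hπ a
    obtain ⟨y, rfl⟩ := hπ b
    rw [← commutatorElement_eq_one_iff_mul_comm, ← map_commutatorElement,
      QuotientGroup.mk'_apply, QuotientGroup.eq_one_iff]
    exact commutator_mem_frattini hP x y⟩⟩
  have hexp (v : P ⧸ frattini P) : v ^ p = 1 := by
    obtain ⟨x, rfl⟩ := hπ v
    rw [← map_pow, QuotientGroup.mk'_apply, QuotientGroup.eq_one_iff]
    exact pow_mem_frattini hP x
  obtain ⟨f, hf⟩ := hm
  obtain ⟨t, htS, htm, ht⟩ := exists_finset_subset_card_le_closure_eq_top_of_pow_eq_one hexp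
    ⟨π ∘ f, by rw [Set.range_comp]; exact closure_image_eq_top hπ hf⟩ (closure_image_eq_top hπ hS)
  refine ⟨t, htS, htm, frattini_nongenerating ?_⟩
  rw [← QuotientGroup.ker_mk' (frattini P), ← comap_map_eq, MonoidHom.map_closure, ht, comap_top]

end IsPGroup

theorem IsPGroup.pi {p : ℕ} {η : Type*} [Finite η] {Q : η → Type*} [∀ i, Group (Q i)]
    (h : ∀ i, IsPGroup p (Q i)) : IsPGroup p (∀ i, Q i) := by
  intro g
  choose k hk using fun i => h i (g i)
  obtain ⟨N, hN⟩ := (Set.finite_range k).bddAbove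
  refine ⟨N, funext fun i => ?_⟩
  obtain ⟨d, hd⟩ := Nat.exists_eq_add_of_le (hN ⟨i, rfl⟩)
  rw [Pi.pow_apply, hd, pow_add, pow_mul, hk, one_pow, Pi.one_apply]

theorem exists_fin_closure_eq_of_card_le {G : Type*} [Group G] {t : Finset G} {m : ℕ}
    (ht : t.card ≤ m) :
    ∃ g : Fin m → G, (∀ k, g k = 1 ∨ g k ∈ t) ∧ closure (Set.range g) = closure (t : Set G) := by
  let e := t.equivFin.symm
  let g : Fin m → G := fun k => if h : (k : ℕ) < t.card then e ⟨k, h⟩ else 1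
  have hg (k : Fin m) : g k = 1 ∨ g k ∈ t := by
    unfold g
    split_ifs
    exacts [Or.inr (e _).2, Or.inl rfl]
  refine ⟨g, hg, le_antisymm ((closure_le _).mpr ?_) (closure_mono fun x hx => ?_)⟩
  · rintro _ ⟨k, rfl⟩
    rcases hg k with h | h
    · exact h ▸ one_mem _
    · exact subset_closure h
  · refine ⟨Fin.castLE ht (e.symm ⟨x, hx⟩), ?_⟩
    simp [g]

namespace Pi

variable {η : Type*} [Finite η] {Q : η → Type*} [∀ i, Group (Q i)]

theorem exists_pow_eq_mulSingle [DecidableEq η]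
    (hco : Pairwise fun i j => (Nat.card (Q i)).Coprime (Nat.card (Q j))) (i : η) :
    ∃ k : ℕ, ∀ g : ∀ j, Q j, g ^ k = Pi.mulSingle i (g i) := by
  have := Fintype.ofFinite η
  have hcop : (Nat.card (Q i)).Coprime (∏ j ∈ Finset.univ.erase i, Nat.card (Q j)) :=
    Nat.Coprime.prod_right fun j hj => hco (Finset.ne_of_mem_erase hj).symm
  obtain ⟨k, hk1, hk0⟩ := Nat.chineseRemainder hcop 1 0
  refine ⟨k, fun g => funext fun j => ?_⟩
  rcases eq_or_ne j i with rfl | hji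
  · rw [Pi.pow_apply, Pi.mulSingle_eq_same]
    conv_rhs => rw [← pow_one (g j)]
    rw [pow_eq_pow_iff_modEq]
    exact hk1.of_dvd (_root_.orderOf_dvd_natCard _)
  · rw [Pi.pow_apply, Pi.mulSingle_eq_of_ne hji, ← orderOf_dvd_iff_pow_eq_one]
    have hj : j ∈ Finset.univ.erase i := Finset.mem_erase.mpr ⟨hji, Finset.mem_univ j⟩
    exact (_root_.orderOf_dvd_natCard _).trans
      ((Finset.dvd_prod_of_mem _ hj).trans (Nat.modEq_zero_iff_dvd.mp hk0))

theorem closure_eq_top_of_coprime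
    (hco : Pairwise fun i j => (Nat.card (Q i)).Coprime (Nat.card (Q j)))
    {S : Set (∀ i, Q i)} (hS : ∀ i, closure (Function.eval i '' S) = ⊤) : closure S = ⊤ := by
  classical
  refine eq_top_iff.mpr fun x _ => pi_mem_of_mulSingle_mem x fun i => ?_
  obtain ⟨k, hk⟩ := exists_pow_eq_mulSingle hco i
  have : closure (Function.eval i '' S) ≤ (closure S).comap (MonoidHom.mulSingle Q i) := by
    rw [closure_le]
    rintro _ ⟨s, hs, rfl⟩
    rw [SetLike.mem_coe, mem_comap, MonoidHom.mulSingle_apply, Function.eval, ← hk]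
    exact pow_mem (subset_closure hs) k
  exact this (hS i ▸ mem_top (x i))

theorem exists_fin_closure_eq_top_of_isPGroup [∀ i, Finite (Q i)] {p : η → ℕ}
    [∀ i, Fact (p i).Prime]
    (hp : Function.Injective p) (hQ : ∀ i, IsPGroup (p i) (Q i)) {m : ℕ}
    (hm : ∃ f : Fin m → ∀ i, Q i, closure (Set.range f) = ⊤) {S : Set (∀ i, Q i)}
    (hS : closure S = ⊤) :
    ∃ g : Fin m → ∀ i, Q i,
      (∀ k i, g k i = 1 ∨ g k i ∈ Function.eval i '' S) ∧ closure (Set.range g) = ⊤ := by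
  obtain ⟨f, hf⟩ := hm
  have hsel (i : η) : ∃ gi : Fin m → Q i,
      (∀ k, gi k = 1 ∨ gi k ∈ Function.eval i '' S) ∧ closure (Set.range gi) = ⊤ := by
    have hev := Function.surjective_eval (β := Q) i
    obtain ⟨t, htS, htm, ht⟩ := (hQ i).exists_finset_subset_card_le_closure_eq_top
      ⟨fun k => f k i, by
        rw [show (fun k => f k i) = Function.eval i ∘ f from rfl, Set.range_comp]
        exact closure_image_eq_top (f := Pi.evalMonoidHom Q i) hev hf⟩
      (closure_image_eq_top (f := Pi.evalMonoidHom Q i) hev hS)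
    obtain ⟨gi, hgi, hgit⟩ := exists_fin_closure_eq_of_card_le htm
    exact ⟨gi, fun k => (hgi k).imp_right (htS ·), hgit.trans ht⟩
  choose g hg1 hg2 using hsel
  refine ⟨fun k i => g i k, fun k i => hg1 i k, closure_eq_top_of_coprime ?_ fun i => ?_⟩
  · intro i j hij
    obtain ⟨a, ha⟩ := IsPGroup.iff_card.mp (hQ i)
    obtain ⟨b, hb⟩ := IsPGroup.iff_card.mp (hQ j)
    rw [ha, hb]
    exact ((Nat.coprime_primes Fact.out Fact.out).mpr (hp.ne hij)).pow a b
  · rw [← Set.range_comp]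
    exact hg2 i

end Pi

section Engel

variable {G H : Type*} [Group G] [Group H] {n : ℕ}

theorem engelComm_map (φ : G →* H) (x y : G) (n : ℕ) :
    φ (engelComm x y n) = engelComm (φ x) (φ y) n := by
  induction n with
  | zero => rfl
  | succ k ih => simp only [engelComm, map_commutatorElement, ih]

theorem IsNEngel.map {φ : G →* H} (hφ : Function.Surjective φ) {y : G} (h : IsNEngel n y) :
    IsNEngel n (φ y) := by
  intro x
  obtain ⟨x, rfl⟩ := hφ x
  rw [← engelComm_map, h x, map_one]

theorem isNEngel_one (hn : 0 < n) : IsNEngel n (1 : G) := by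
  intro x
  obtain ⟨k, rfl⟩ := Nat.exists_eq_succ_of_ne_zero hn.ne'
  exact commutatorElement_one_right _

theorem IsNEngel.pi {η : Type*} {Q : η → Type*} [∀ i, Group (Q i)] {y : ∀ i, Q i}
    (h : ∀ i, IsNEngel n (y i)) : IsNEngel n y := fun x => funext fun i =>
  (engelComm_map (Pi.evalMonoidHom Q i) x y n).trans (h i (x i))

end Engel

theorem stmt5_general {G : Type*} [Group G] [Finite G] (hG : Group.IsNilpotent G)
    (m n : ℕ) (hn : 0 < n)
    (hgen : ∃ f : Fin m → G, Subgroup.closure (Set.range f) = ⊤)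
    (X : Set G) (hXE : ∀ y ∈ X, IsNEngel n y) (hX : Subgroup.closure X = ⊤) :
    ∃ f : Fin m → G, (∀ i, IsNEngel n (f i)) ∧ Subgroup.closure (Set.range f) = ⊤ := by
  obtain ⟨e⟩ := (Group.isNilpotent_of_finite_tfae.out 0 4 rfl rfl).mp hG
  have (p : (Nat.card G).primeFactors) : Fact (p : ℕ).Prime := ⟨Nat.prime_of_mem_primeFactors p.2⟩
  obtain ⟨f, hf⟩ := hgen
  have hpGroup (p : (Nat.card G).primeFactors) : IsPGroup p (∀ P : Sylow p G, P) :=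
    IsPGroup.pi fun P => P.isPGroup'
  have hf' : closure (Set.range (e.symm.toMonoidHom ∘ f)) = ⊤ := by
    rw [Set.range_comp]
    exact closure_image_eq_top e.symm.surjective hf
  have hX' := closure_image_eq_top (f := e.symm.toMonoidHom) e.symm.surjective hX
  obtain ⟨g, hgX, hg⟩ :=
    Pi.exists_fin_closure_eq_top_of_isPGroup Subtype.val_injective hpGroup ⟨_, hf'⟩ hX'
  refine ⟨e ∘ g, fun k => (IsNEngel.pi fun p => ?_).map (φ := e.toMonoidHom) e.surjective, ?_⟩
  · rcases hgX k p with h | ⟨_, ⟨x, hx, rfl⟩, h⟩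
    · exact h ▸ isNEngel_one hn
    · exact h ▸ ((hXE x hx).map (φ := e.symm.toMonoidHom) e.symm.surjective).map
        (φ := Pi.evalMonoidHom _ p) (Function.surjective_eval p)
  · rw [Set.range_comp]
    exact closure_image_eq_top (f := e.toMonoidHom) e.surjective hg

theorem stmt5 {G : Type*} [Group G] [Finite G] (hG : Group.IsNilpotent G)
    (m n : ℕ) (hm : 0 < m) (hn : 0 < n)
    (hgen : ∃ f : Fin m → G, Subgroup.closure (Set.range f) = ⊤)
    (X : Set G) (hXE : ∀ y ∈ X, IsNEngel n y) (hX : Subgroup.closure X = ⊤) :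
    ∃ f : Fin m → G, (∀ i, IsNEngel n (f i)) ∧ Subgroup.closure (Set.range f) = ⊤ :=
  stmt5_general hG m n hn hgen X hXE hX
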